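/- arXiv:1505.07312 — 11 statements merged into one kernel-verified Lean document; each statement's English description precedes it below -/
import Mathlib

section
/- For every 2-coloring of the edges of the transitive tournament on {1,...,n} (where the edge between i < j is directed from i to j), there exists a monochromatic directed path with at least ⌈√n⌉ vertices. -/
/-!
Let `L c v` be the number of vertices of a longest increasing `c`-coloured path ending at `v`.
If `u < v` and the edge `uv` has colour `c`, then a longest `c`-path ending at `u` extends by `v`,
so `L c u < L c v`. Hence the vector `(L c v)_c` determines `v`, and if every monochromatic path
has at most `M` vertices, there are at most `M ^ (number of colours)` vertices.
-/

namespace MonoPath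

variable {α κ : Type*} [LinearOrder α] (col : α → α → κ)

def MonoEdge (c : κ) (a b : α) : Prop := a < b ∧ col a b = c

variable {col}

theorem pairwise_lt_of_isChain {c : κ} {l : List α} (hl : l.IsChain (MonoEdge col c)) :
    l.Pairwise (· < ·) :=
  (hl.imp fun _ _ h => h.1).pairwise

theorem exists_strictMono_of_isChain {c : κ} {l : List α} (hl : l.IsChain (MonoEdge col c))
    {k : ℕ} (hk : k ≤ l.length) :
    ∃ s : Fin k → α, StrictMono s ∧
      ∀ (i : ℕ) (h : i + 1 < k), col (s ⟨i, by omega⟩) (s ⟨i + 1, h⟩) = c := by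
  refine ⟨fun i => l[i.1], fun i j hij => ?_,
    fun i h => (List.isChain_iff_getElem.mp hl i (by omega)).2⟩
  exact List.pairwise_iff_getElem.mp (pairwise_lt_of_isChain hl) i j (by omega) (by omega) hij

variable [Fintype α]

theorem length_le_card_of_isChain {c : κ} {l : List α} (hl : l.IsChain (MonoEdge col c)) :
    l.length ≤ Fintype.card α :=
  (pairwise_lt_of_isChain hl).nodup.length_le_card

variable (col)

def HasMonoPathEndingAt (c : κ) (v : α) (k : ℕ) : Prop :=
  ∃ l : List α, l.length = k ∧ l.IsChain (MonoEdge col c) ∧ l.getLast? = some v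

-- Paths have distinct vertices, so the search bound `Fintype.card α` loses nothing.
open Classical in
noncomputable def longestPathLength (c : κ) (v : α) : ℕ :=
  Nat.findGreatest (HasMonoPathEndingAt col c v) (Fintype.card α)

variable {col}

theorem hasMonoPathEndingAt_longestPathLength (c : κ) (v : α) :
    HasMonoPathEndingAt col c v (longestPathLength col c v) := by
  classical
  exact Nat.findGreatest_spec (m := 1) (Fintype.card_pos_iff.mpr ⟨v⟩)
    ⟨[v], rfl, List.isChain_singleton v, rfl⟩

theorem longestPathLength_pos (c : κ) (v : α) : 0 < longestPathLength col c v := by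
  classical
  exact Nat.le_findGreatest (m := 1) (Fintype.card_pos_iff.mpr ⟨v⟩)
    ⟨[v], rfl, List.isChain_singleton v, rfl⟩

theorem longestPathLength_lt {u v : α} (huv : u < v) :
    longestPathLength col (col u v) u < longestPathLength col (col u v) v := by
  obtain ⟨l, hlen, hl, hlast⟩ := hasMonoPathEndingAt_longestPathLength (col u v) u
  have hext : (l ++ [v]).IsChain (MonoEdge col (col u v)) :=
    hl.append (List.isChain_singleton v) (by simp [hlast, MonoEdge, huv])
  classical
  have hle : (l ++ [v]).length ≤ longestPathLength col (col u v) v :=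
    Nat.le_findGreatest (length_le_card_of_isChain hext) ⟨_, rfl, hext, by simp⟩
  simp only [List.length_append, List.length_singleton, hlen] at hle
  omega

variable (col) in
theorem injective_longestPathLength :
    Function.Injective fun v c => longestPathLength col c v := by
  intro u v huv
  by_contra hne
  rcases lt_or_gt_of_ne hne with h | h
  · exact (longestPathLength_lt h).ne (congrFun huv _)
  · exact (longestPathLength_lt h).ne (congrFun huv _).symm

variable [Fintype κ]

theorem card_le_pow_of_longestPathLength_le {M : ℕ}
    (hM : ∀ c v, longestPathLength col c v ≤ M) :
    Fintype.card α ≤ M ^ Fintype.card κ := by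
  classical
  let f : α → κ → Fin M := fun v c => ⟨longestPathLength col c v - 1, by
    have := longestPathLength_pos (col := col) c v
    have := hM c v
    omega⟩
  have hf : Function.Injective f := by
    intro u v huv
    refine injective_longestPathLength col (funext fun c => ?_)
    show longestPathLength col c u = longestPathLength col c v
    have h := congrArg Fin.val (congrFun huv c)
    have := longestPathLength_pos (col := col) c u
    have := longestPathLength_pos (col := col) c v
    simp only [f] at h
    omega
  simpa using Fintype.card_le_of_injective f hf

variable (col) in
theorem exists_isChain_card_le_length_pow [Nonempty κ] :
    ∃ c, ∃ l : List α,
      l.IsChain (MonoEdge col c) ∧ Fintype.card α ≤ l.length ^ Fintype.card κ := by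
  rcases isEmpty_or_nonempty α with hα | hα
  · exact ⟨Classical.arbitrary κ, [], List.isChain_nil, by simp⟩
  obtain ⟨⟨c, v⟩, -, hmax⟩ := Finset.exists_max_image Finset.univ
    (fun p : κ × α => longestPathLength col p.1 p.2) Finset.univ_nonempty
  obtain ⟨l, hlen, hl, -⟩ := hasMonoPathEndingAt_longestPathLength (col := col) c v
  exact ⟨c, l, hl, hlen ▸ card_le_pow_of_longestPathLength_le (col := col)
    fun c' v' => hmax (c', v') (Finset.mem_univ _)⟩

end MonoPath

/-- Every 2-coloring of the edges of the transitive tournament on `n` vertices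
contains a monochromatic directed path with at least `⌈√n⌉` vertices. -/
theorem two_color_mono_path (n : ℕ) (col : Fin n → Fin n → Fin 2) :
    ∃ s : Fin ⌈Real.sqrt n⌉₊ → Fin n, StrictMono s ∧
      ∃ c : Fin 2, ∀ (i : ℕ) (h : i + 1 < ⌈Real.sqrt n⌉₊),
        col (s ⟨i, by omega⟩) (s ⟨i + 1, h⟩) = c := by
  obtain ⟨c, l, hl, hcard⟩ := MonoPath.exists_isChain_card_le_length_pow col
  have hk : ⌈Real.sqrt n⌉₊ ≤ l.length := by
    rw [Nat.ceil_le, Real.sqrt_le_left (Nat.cast_nonneg _)]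
    simpa using (Nat.cast_le (α := ℝ)).mpr hcard
  obtain ⟨s, hs, hcol⟩ := MonoPath.exists_strictMono_of_isChain hl hk
  exact ⟨s, hs, c, hcol⟩
end

section
/- For every r-coloring of the edges of the transitive tournament on {1,...,n}, there exists a monochromatic directed path with at least ⌈n^{1/r}⌉ vertices. -/
/-- Length (number of vertices) of the longest monochromatic path of color `c`
ending at `v`. -/
def chainLen {n r : ℕ} (col : Fin n → Fin n → Fin r) (v : Fin n) (c : Fin r) : ℕ :=
  ((Finset.univ.filter fun u : Fin n => u < v ∧ col u v = c).attach.sup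
    fun u => chainLen col u.1 c) + 1
termination_by v.val
decreasing_by
  exact (Finset.mem_filter.mp u.2).2.1

lemma chainLen_pos {n r : ℕ} (col : Fin n → Fin n → Fin r) (v : Fin n) (c : Fin r) :
    0 < chainLen col v c := by
  rw [chainLen]; exact Nat.succ_pos _

lemma chainLen_lt {n r : ℕ} (col : Fin n → Fin n → Fin r) {u v : Fin n} {c : Fin r}
    (huv : u < v) (hc : col u v = c) : chainLen col u c < chainLen col v c := by
  conv_rhs => rw [chainLen]
  refine Nat.lt_succ_of_le ?_
  have hmem : u ∈ Finset.univ.filter fun w : Fin n => w < v ∧ col w v = c := by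
    simp [huv, hc]
  exact Finset.le_sup
    (f := fun u : {x // x ∈ Finset.univ.filter fun w : Fin n => w < v ∧ col w v = c} =>
      chainLen col u.1 c) (Finset.mem_attach _ ⟨u, hmem⟩)

lemma chainLen_path {n r : ℕ} (col : Fin n → Fin n → Fin r) :
    ∀ N (v : Fin n) (c : Fin r), v.val < N →
    ∃ s : Fin (chainLen col v c) → Fin n, StrictMono s ∧
      (∀ hl : chainLen col v c - 1 < chainLen col v c, s ⟨chainLen col v c - 1, hl⟩ = v) ∧
      ∀ (i : ℕ) (h : i + 1 < chainLen col v c),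
        col (s ⟨i, Nat.lt_of_succ_lt h⟩) (s ⟨i + 1, h⟩) = c := by
  intro N
  induction N with
  | zero => intro v c h; omega
  | succ N ih =>
    intro v c hv
    have hK : chainLen col v c =
        ((Finset.univ.filter fun u : Fin n => u < v ∧ col u v = c).sup
          fun u => chainLen col u c) + 1 := by
      rw [chainLen]
      exact congrArg (· + 1) (Finset.sup_attach _ fun u => chainLen col u c)
    set S := Finset.univ.filter fun u : Fin n => u < v ∧ col u v = c with hS
    rcases S.eq_empty_or_nonempty with hSe | hSne
    · have h1 : chainLen col v c = 1 := by rw [hK, hSe]; simp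
      refine ⟨fun _ => v, ?_, fun _ => rfl, ?_⟩
      · intro a b hab
        exact absurd (Fin.lt_def.mp hab) (by have := a.isLt; have := b.isLt; omega)
      · intro i h; omega
    · obtain ⟨u, huS, hsup⟩ := Finset.exists_mem_eq_sup S hSne fun u => chainLen col u c
      have hmem := Finset.mem_filter.mp huS
      have huv : u < v := hmem.2.1
      have hcu : col u v = c := hmem.2.2
      set k := chainLen col u c with hk
      have hkpos : 0 < k := chainLen_pos col u c
      have hKk : chainLen col v c = k + 1 := by rw [hK, ← hsup]
      obtain ⟨s', hs'mono, hs'last, hs'edge⟩ := ih u c (by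
        have : u.val < v.val := huv
        omega)
      refine ⟨fun i => if h : i.val < k then s' ⟨i.val, h⟩ else v, ?_, ?_, ?_⟩
      · intro a b hab
        have hab' : a.val < b.val := hab
        have hbK : b.val < k + 1 := by rw [← hKk]; exact b.isLt
        by_cases hb : b.val < k
        · have ha : a.val < k := by omega
          dsimp only
          rw [dif_pos ha, dif_pos hb]
          exact hs'mono (show (⟨a.val, ha⟩ : Fin k) < ⟨b.val, hb⟩ from hab')
        · have ha : a.val < k := by omega
          dsimp only
          rw [dif_pos ha, dif_neg hb]
          have hle : s' ⟨a.val, ha⟩ ≤ s' ⟨k - 1, by omega⟩ :=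
            hs'mono.monotone (show (⟨a.val, ha⟩ : Fin k) ≤ ⟨k - 1, by omega⟩ by
              exact Fin.mk_le_mk.mpr (by omega))
          calc s' ⟨a.val, ha⟩ ≤ s' ⟨k - 1, by omega⟩ := hle
            _ = u := hs'last _
            _ < v := huv
      · intro hl
        have hkv : chainLen col v c - 1 = k := by omega
        simp only
        rw [dif_neg (by omega)]
      · intro i h
        have hiK : i + 1 < k + 1 := by rw [← hKk]; exact h
        by_cases hi1 : i + 1 < k
        · simp only
          rw [dif_pos (show i < k by omega), dif_pos hi1]
          exact hs'edge i hi1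
        · have hieq : i + 1 = k := by omega
          simp only
          rw [dif_pos (show i < k by omega), dif_neg (by omega)]
          have : (⟨i, by omega⟩ : Fin k) = ⟨k - 1, by omega⟩ := Fin.ext (by simp; omega)
          rw [this, hs'last]
          exact hcu

/-- Every r-coloring of the edges of the transitive tournament on `n` vertices
contains a monochromatic directed path with at least `⌈n^(1/r)⌉` vertices. -/
theorem r_color_mono_path (n r : ℕ) (hr : 1 ≤ r) (col : Fin n → Fin n → Fin r) :
    ∃ s : Fin ⌈(n : ℝ) ^ (1 / (r : ℝ))⌉₊ → Fin n, StrictMono s ∧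
      ∃ c : Fin r, ∀ (i : ℕ) (h : i + 1 < ⌈(n : ℝ) ^ (1 / (r : ℝ))⌉₊),
        col (s ⟨i, by omega⟩) (s ⟨i + 1, h⟩) = c := by
  set m := ⌈(n : ℝ) ^ (1 / (r : ℝ))⌉₊ with hm
  rcases Nat.eq_zero_or_pos m with hm0 | hmpos
  · refine ⟨fun i => absurd i.isLt (by omega), ?_, ⟨0, hr⟩, ?_⟩
    · intro a b _; exact absurd a.isLt (by omega)
    · intro i h; omega
  · -- there is some v, c with chainLen col v c ≥ m
    have hclaim : ∃ (v : Fin n) (c : Fin r), m ≤ chainLen col v c := by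
      by_contra hcon
      push_neg at hcon
      set F : Fin n → (Fin r → Fin (m - 1)) := fun v c =>
        ⟨chainLen col v c - 1, by
          have h1 := chainLen_pos col v c
          have h2 := hcon v c
          omega⟩ with hF
      have hinj : Function.Injective F := by
        intro a b hab
        by_contra hne
        rcases lt_or_gt_of_ne hne with hlt | hlt
        · have := chainLen_lt col hlt rfl
          have h1 := chainLen_pos col a (col a b)
          have hc := congrFun hab (col a b)
          have := congrArg Fin.val hc
          simp only [hF] at this
          omega
        · have := chainLen_lt col hlt rfl
          have h1 := chainLen_pos col b (col b a)
          have hc := congrFun hab (col b a)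
          have := congrArg Fin.val hc
          simp only [hF] at this
          omega
      have hcard := Fintype.card_le_of_injective F hinj
      simp only [Fintype.card_fin, Fintype.card_fun] at hcard
      -- real inequality: (m-1)^r < n
      have hx : ((m - 1 : ℕ) : ℝ) < (n : ℝ) ^ (1 / (r : ℝ)) :=
        Nat.lt_ceil.mp (by omega)
      have hxr : ((n : ℝ) ^ (1 / (r : ℝ))) ^ r = (n : ℝ) := by
        rw [← Real.rpow_natCast ((n : ℝ) ^ (1 / (r : ℝ))) r, ← Real.rpow_mul (by positivity)]
        rw [one_div_mul_cancel (Nat.cast_ne_zero.mpr (by omega))]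
        exact Real.rpow_one _
      have hlt : (((m - 1) ^ r : ℕ) : ℝ) < (n : ℝ) := by
        push_cast
        calc ((m - 1 : ℕ) : ℝ) ^ r < ((n : ℝ) ^ (1 / (r : ℝ))) ^ r :=
              pow_lt_pow_left₀ hx (by positivity) (by omega)
          _ = (n : ℝ) := hxr
      have : (m - 1) ^ r < n := by exact_mod_cast hlt
      omega
    obtain ⟨v, c, hvc⟩ := hclaim
    obtain ⟨s, hsmono, _, hsedge⟩ := chainLen_path col (n) v c v.isLt
    refine ⟨fun i => s ⟨i.val, lt_of_lt_of_le i.isLt hvc⟩, ?_, c, ?_⟩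
    · intro a b hab
      exact hsmono (show (⟨a.val, _⟩ : Fin _) < ⟨b.val, _⟩ from hab)
    · intro i h
      exact hsedge i (lt_of_lt_of_le h hvc)
end

section
/- Suppose L₁, L₂, ..., L_N is a sequence of triples from {1,...,n}³ such that for every i < j, L_i is strictly less than L_j in at least two of the three coordinates. Then N ≤ n². -/
/-- If `L₁, …, L_N` are triples from `{1,…,n}³` such that for every `i < j`,
`L i` is strictly less than `L j` in at least two coordinates, then `N ≤ n²`. -/
theorem triples_trivial_bound (n N : ℕ) (L : Fin N → Fin 3 → ℕ)
    (hrange : ∀ k c, 1 ≤ L k c ∧ L k c ≤ n)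
    (hinc : ∀ i j : Fin N, i < j → ∃ c₁ c₂ : Fin 3, c₁ ≠ c₂ ∧
      L i c₁ < L j c₁ ∧ L i c₂ < L j c₂) :
    N ≤ n ^ 2 := by
  -- map to Fin n × Fin n via the first two coordinates
  have hf : ∀ k (c : Fin 3), L k c - 1 < n := fun k c => by
    have h := hrange k c; omega
  let f : Fin N → Fin n × Fin n := fun k =>
    (⟨L k 0 - 1, hf k 0⟩, ⟨L k 1 - 1, hf k 1⟩)
  -- for i < j, some coordinate among 0,1 strictly increases
  have key : ∀ i j : Fin N, i < j → L i 0 < L j 0 ∨ L i 1 < L j 1 := by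
    intro i j hij
    obtain ⟨c₁, c₂, hne, h1, h2⟩ := hinc i j hij
    fin_cases c₁ <;> fin_cases c₂ <;> simp_all <;> tauto
  have hinj : Function.Injective f := by
    intro i j hfij
    by_contra hne
    rcases lt_or_gt_of_ne hne with h | h
    · rcases key i j h with hc | hc <;>
      · have := congrArg (fun p : Fin n × Fin n => (p.1.val, p.2.val)) hfij
        have h1 := hrange i 0; have h2 := hrange i 1
        simp [f] at this
        omega
    · rcases key j i h with hc | hc <;>
      · have := congrArg (fun p : Fin n × Fin n => (p.1.val, p.2.val)) hfij
        have h1 := hrange j 0; have h2 := hrange j 1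
        simp [f] at this
        omega
  calc N = Fintype.card (Fin N) := (Fintype.card_fin N).symm
    _ ≤ Fintype.card (Fin n × Fin n) := Fintype.card_le_of_injective f hinj
    _ = n ^ 2 := by simp [sq]
end

section
/- Let L₁, ..., L_N be a sequence of triples of positive integers such that for every i < j, L_i is strictly less than L_j in at least two coordinates, and more generally for each fixed pair of first and second coordinates at most one triple occurs (by the projection property). Build a bipartite graph G on vertex sets A = {a₁,...,a_n} and B = {b₁,...,b_n}, with an edge a_x b_y labeled z for each triple (x, y, z) in the sequence. Then for each label z, the set E_z of edges labeled z forms an induced matching in G: E_z is a matching, and any edge of G joining two vertices each incident to some edge of E_z must itself belong to E_z. -/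
/-- For a valid sequence of triples, the edges labeled `z` of the associated
bipartite graph (edge `a_x b_y` with label `z` for each triple `(x,y,z)`) form an
induced matching: they form a matching, and any edge of the graph joining two
vertices covered by edges labeled `z` is itself labeled `z`. -/
theorem triples_induced_matching (n N : ℕ) (L : Fin N → Fin 3 → ℕ)
    (hrange : ∀ k c, 1 ≤ L k c ∧ L k c ≤ n)
    (hinc : ∀ i j : Fin N, i < j → ∃ c₁ c₂ : Fin 3, c₁ ≠ c₂ ∧
      L i c₁ < L j c₁ ∧ L i c₂ < L j c₂) :
    ∀ z : ℕ,
      (∀ k k' : Fin N, L k 2 = z → L k' 2 = z →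
        (L k 0 = L k' 0 ∨ L k 1 = L k' 1) → k = k') ∧
      (∀ k₁ k₂ k₃ : Fin N, L k₁ 2 = z → L k₂ 2 = z →
        L k₃ 0 = L k₁ 0 → L k₃ 1 = L k₂ 1 → L k₃ 2 = z) := by
  have key : ∀ i j : Fin N, i < j → ∀ c : Fin 3, L i c = L j c →
      ∀ c', c' ≠ c → L i c' < L j c' := by
    intro i j hij c hc c' hc'
    obtain ⟨c₁, c₂, h12, h1, h2⟩ := hinc i j hij
    have hc1 : c₁ ≠ c := fun h => by subst h; omega
    have hc2 : c₂ ≠ c := fun h => by subst h; omega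
    have hor : c' = c₁ ∨ c' = c₂ := by
      have l1 := c.isLt; have l2 := c'.isLt
      have l3 := c₁.isLt; have l4 := c₂.isLt
      simp only [Fin.ext_iff, ne_eq] at h12 hc1 hc2 hc' ⊢
      omega
    rcases hor with h | h <;> subst h <;> assumption
  have K : ∀ i j : Fin N, i ≠ j → ∀ c : Fin 3, L i c = L j c →
      (∀ c', c' ≠ c → L i c' < L j c') ∨ (∀ c', c' ≠ c → L j c' < L i c') := by
    intro i j hij c hc
    rcases lt_or_gt_of_ne hij with h | h
    · exact Or.inl (key i j h c hc)
    · exact Or.inr (key j i h c hc.symm)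
  intro z
  constructor
  · intro k k' hk hk' heq
    by_contra hne
    have h2 : L k 2 = L k' 2 := by rw [hk, hk']
    rcases K k k' hne 2 h2 with h | h
    · have a0 := h 0 (by decide)
      have a1 := h 1 (by decide)
      omega
    · have a0 := h 0 (by decide)
      have a1 := h 1 (by decide)
      omega
  · intro k₁ k₂ k₃ h1 h2 e0 e1
    by_cases h31 : k₃ = k₁
    · rw [h31]; exact h1
    by_cases h32 : k₃ = k₂
    · rw [h32]; exact h2
    have A := K k₃ k₁ h31 0 e0
    have B := K k₃ k₂ h32 1 e1
    rcases A with A | A <;> rcases B with B | B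
    · have a1 := A 1 (by decide); have a2 := A 2 (by decide)
      have b0 := B 0 (by decide); have b2 := B 2 (by decide)
      have h12 : k₁ ≠ k₂ := by intro h; subst h; omega
      rcases K k₁ k₂ h12 2 (h1.trans h2.symm) with C | C
      · have c1 := C 1 (by decide); omega
      · have c0 := C 0 (by decide); omega
    · have a2 := A 2 (by decide); have b2 := B 2 (by decide); omega
    · have a2 := A 2 (by decide); have b2 := B 2 (by decide); omega
    · have a1 := A 1 (by decide); have a2 := A 2 (by decide)
      have b0 := B 0 (by decide); have b2 := B 2 (by decide)
      have h12 : k₁ ≠ k₂ := by intro h; subst h; omega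
      rcases K k₁ k₂ h12 2 (h1.trans h2.symm) with C | C
      · have c0 := C 0 (by decide); omega
      · have c1 := C 1 (by decide); omega
end

section
/- Let L₁, ..., L_N be a sequence of triples from {1,...,n}³ such that for every i < j, L_i is strictly less than L_j in at least two coordinates. Build the labeled bipartite graph G as follows: for each triple (x,y,z) place an edge a_x b_y labeled z. Then for each label z, the edges labeled z can be ordered as (a_{i₁}, b_{j₁}), (a_{i₂}, b_{j₂}), ... with i₁ < i₂ < ... and j₁ < j₂ < ... ; that is, the matching edges do not cross. -/
/-- In the bipartite graph built from a valid sequence of triples, the edges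
carrying a common label form an ordered (non-crossing) matching: distinct edges
of a common label have distinct left endpoints, and the left and right endpoints
increase together. -/
theorem triples_ordered_matching (n N : ℕ) (L : Fin N → Fin 3 → ℕ)
    (hrange : ∀ k c, 1 ≤ L k c ∧ L k c ≤ n)
    (hinc : ∀ i j : Fin N, i < j → ∃ c₁ c₂ : Fin 3, c₁ ≠ c₂ ∧
      L i c₁ < L j c₁ ∧ L i c₂ < L j c₂) :
    ∀ k k' : Fin N, L k 2 = L k' 2 →
      (L k 0 = L k' 0 → k = k') ∧ (L k 0 < L k' 0 → L k 1 < L k' 1) := by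
  have key : ∀ i j : Fin N, i < j → L i 2 = L j 2 →
      L i 0 < L j 0 ∧ L i 1 < L j 1 := by
    intro i j hij h2
    obtain ⟨c₁, c₂, hne, h1, h3⟩ := hinc i j hij
    fin_cases c₁ <;> fin_cases c₂ <;> simp_all <;> omega
  intro k k' h2
  rcases lt_trichotomy k k' with h | h | h
  · obtain ⟨h0, h1⟩ := key k k' h h2
    exact ⟨fun he => absurd he (by omega), fun _ => h1⟩
  · subst h; exact ⟨fun _ => rfl, fun h => absurd h (by omega)⟩
  · obtain ⟨h0, h1⟩ := key k' k h h2.symm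
    exact ⟨fun he => absurd he (by omega), fun h => absurd h (by omega)⟩
end

section
/- Let L₁, ..., L_N be a sequence of triples from {1,...,n}³ such that for every i < j, L_i is strictly less than L_j in at least two coordinates, and let G be the bipartite labeled graph where each triple (x,y,z) yields an edge a_x b_y with label z. Then G is Σ-free: there are no vertices b_h, a_i, b_j, a_k, b_l with i < k and h ≤ j ≤ l such that edges a_i b_h and a_k b_l both carry label z, and edges a_i b_j and a_k b_j are both present in G (with any labels). -/
/-- The bipartite graph built from a valid sequence of triples is Σ-free: there
are no vertices `b_h, a_i, b_j, a_k, b_l` with `i < k` and `h ≤ j ≤ l` such that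
edges `a_i b_h` and `a_k b_l` carry the same label while edges `a_i b_j` and
`a_k b_j` are present in the graph. -/
theorem triples_sigma_free (n N : ℕ) (L : Fin N → Fin 3 → ℕ)
    (hrange : ∀ k c, 1 ≤ L k c ∧ L k c ≤ n)
    (hinc : ∀ i j : Fin N, i < j → ∃ c₁ c₂ : Fin 3, c₁ ≠ c₂ ∧
      L i c₁ < L j c₁ ∧ L i c₂ < L j c₂) :
    ∀ (p q r s : Fin N) (j : ℕ),
      L p 0 < L q 0 → L p 1 ≤ j → j ≤ L q 1 → L p 2 = L q 2 →
      L r 0 = L p 0 → L r 1 = j → L s 0 = L q 0 → L s 1 = j → False := by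
  intro p q r s j h0 h1 h2 h3 hr0 hr1 hs0 hs1
  have two2 : ∀ a b : Fin N, a < b →
      (L a 0 < L b 0 ∧ L a 1 < L b 1) ∨ (L a 0 < L b 0 ∧ L a 2 < L b 2) ∨
      (L a 1 < L b 1 ∧ L a 2 < L b 2) := by
    intro a b hab
    obtain ⟨c₁, c₂, hne, hc₁, hc₂⟩ := hinc a b hab
    fin_cases c₁ <;> fin_cases c₂ <;> simp_all <;> tauto
  have hpr : L p 2 ≤ L r 2 := by
    rcases lt_trichotomy p r with h | h | h
    · rcases two2 p r h with ⟨a, b⟩ | ⟨a, b⟩ | ⟨a, b⟩ <;> omega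
    · rw [h]
    · rcases two2 r p h with ⟨a, b⟩ | ⟨a, b⟩ | ⟨a, b⟩ <;> omega
  have hsq : L s 2 ≤ L q 2 := by
    rcases lt_trichotomy s q with h | h | h
    · rcases two2 s q h with ⟨a, b⟩ | ⟨a, b⟩ | ⟨a, b⟩ <;> omega
    · rw [h]
    · rcases two2 q s h with ⟨a, b⟩ | ⟨a, b⟩ | ⟨a, b⟩ <;> omega
  have hrs : L r 2 < L s 2 := by
    rcases lt_trichotomy r s with h | h | h
    · rcases two2 r s h with ⟨a, b⟩ | ⟨a, b⟩ | ⟨a, b⟩ <;> omega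
    · rw [h] at hr0; omega
    · rcases two2 s r h with ⟨a, b⟩ | ⟨a, b⟩ | ⟨a, b⟩ <;> omega
  omega
end

section
/- Let G be a bipartite graph on 2n vertices whose edge set is a disjoint union of n matchings E₁, ..., E_n that are 2-separated: no two distinct edges of the same matching E_i are joined by a path of length at most 2 in G. Then G has at most n^{3/2} edges. -/
/-!
Let `d(a)` be the degree of a left vertex `a`. Counting the pairs of edges sharing a left endpoint,
`∑ₐ d(a)² = ∑ₑ d(e.1)`. Within one matching `Eᵢ`, the neighbourhoods of the left endpoints of its
edges are pairwise disjoint (a common neighbour would be a path of length 2), so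
`∑_{e ∈ Eᵢ} d(e.1) ≤ |B|`. Summing over the `n` matchings and applying Cauchy–Schwarz to the `m` edges,
`m² = (∑ₐ d(a))² ≤ |A| ∑ₐ d(a)² ≤ n |A| |B| ≤ n³`, as `|A| + |B| = 2n`.
-/

open Finset

namespace Finset

variable {α β : Type*} [DecidableEq α]

def leftDegree (S : Finset (α × β)) (a : α) : ℕ := #{e ∈ S | e.1 = a}

theorem sum_leftDegree_fst_le_card [Fintype β] (S M : Finset (α × β))
    (hM : ∀ e ∈ M, ∀ e' ∈ M, ∀ b, (e.1, b) ∈ S → (e'.1, b) ∈ S → e = e') :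
    ∑ e ∈ M, S.leftDegree e.1 ≤ Fintype.card β := by
  simp only [leftDegree]
  rw [← card_sigma, ← card_univ]
  refine card_le_card_of_injOn (fun p => p.2.2) (fun _ _ => mem_coe.2 (mem_univ _)) ?_
  rintro ⟨e, f⟩ hp ⟨e', f'⟩ hp' (hb : f.2 = f'.2)
  simp only [coe_sigma, Set.mem_sigma_iff, mem_coe, mem_filter] at hp hp'
  obtain ⟨he, hf, hfe⟩ := hp
  obtain ⟨he', hf', hfe'⟩ := hp'
  obtain rfl : e = e' := hM e he e' he' f.2 (by rwa [← hfe]) (by rwa [hb, ← hfe'])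
  obtain rfl : f = f' := Prod.ext (hfe.trans hfe'.symm) hb
  rfl

variable [Fintype α] (S : Finset (α × β))

theorem sum_leftDegree : ∑ a, S.leftDegree a = #S :=
  (card_eq_sum_card_fiberwise fun _ _ => mem_univ _).symm

theorem sum_leftDegree_fst : ∑ e ∈ S, S.leftDegree e.1 = ∑ a, S.leftDegree a ^ 2 := by
  rw [← sum_fiberwise S Prod.fst]
  refine sum_congr rfl fun a _ => ?_
  rw [sum_congr rfl fun e he => congrArg S.leftDegree (mem_filter.1 he).2, sum_const, smul_eq_mul,
    sq, leftDegree]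

theorem sq_card_le_card_mul_sum_leftDegree :
    #S ^ 2 ≤ Fintype.card α * ∑ e ∈ S, S.leftDegree e.1 := by
  rw [← sum_leftDegree, sum_leftDegree_fst]
  exact sq_sum_le_card_mul_sum_sq

end Finset

theorem Real.le_rpow_three_div_two_of_sq_le_pow_three {x y : ℝ} (hx : 0 ≤ x) (hy : 0 ≤ y)
    (h : x ^ 2 ≤ y ^ 3) : x ≤ y ^ (3 / 2 : ℝ) :=
  calc x = √(x ^ 2) := (Real.sqrt_sq hx).symm
    _ ≤ √(y ^ 3) := Real.sqrt_le_sqrt h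
    _ = y ^ (3 / 2 : ℝ) := by
      rw [Real.sqrt_eq_rpow, ← Real.rpow_natCast, ← Real.rpow_mul hy]
      norm_num

theorem two_separated_bound_general {A B : Type*} [Fintype A] [Fintype B]
    (n : ℕ)
    (hcard : Fintype.card A + Fintype.card B = 2 * n)
    (E : Fin n → Finset (A × B))
    (hdisj : ∀ i j, i ≠ j → Disjoint (E i) (E j))
    (hsep : ¬ ∃ t : ℕ, t ≤ 2 ∧ ∃ (a : ℕ → A ⊕ B) (i : Fin n) (e e' : A × B),
      e ∈ E i ∧ e' ∈ E i ∧ e ≠ e' ∧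
      (a 0 = Sum.inl e.1 ∨ a 0 = Sum.inr e.2) ∧
      (a t = Sum.inl e'.1 ∨ a t = Sum.inr e'.2) ∧
      (∀ s < t, ∃ (j : Fin n) (f : A × B), f ∈ E j ∧
        ((a s = Sum.inl f.1 ∧ a (s + 1) = Sum.inr f.2) ∨
         (a s = Sum.inr f.2 ∧ a (s + 1) = Sum.inl f.1)))) :
    ((∑ i, (E i).card : ℕ) : ℝ) ≤ (n : ℝ) ^ (3 / 2 : ℝ) := by
  classical
  set S := univ.biUnion E
  have hE : ((univ : Finset (Fin n)) : Set (Fin n)).PairwiseDisjoint E :=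
    fun i _ j _ hij => hdisj i j hij
  have hsepS : ∀ i, ∀ e ∈ E i, ∀ e' ∈ E i, ∀ b, (e.1, b) ∈ S → (e'.1, b) ∈ S → e = e' := by
    intro i e he e' he' b hb hb'
    obtain ⟨j, -, hj⟩ := mem_biUnion.1 hb
    obtain ⟨j', -, hj'⟩ := mem_biUnion.1 hb'
    by_contra hne
    -- the path `e.1 — b — e'.1` joins two distinct edges of `E i`
    refine hsep ⟨2, le_rfl,
      fun s => if s = 0 then .inl e.1 else if s = 1 then .inr b else .inl e'.1,
      i, e, e', he, he', hne, .inl rfl, .inl rfl, fun s hs => ?_⟩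
    interval_cases s
    · exact ⟨j, (e.1, b), hj, .inl ⟨rfl, rfl⟩⟩
    · exact ⟨j', (e'.1, b), hj', .inr ⟨rfl, rfl⟩⟩
  have hm : #S ^ 2 ≤ n ^ 3 := calc
    #S ^ 2 ≤ Fintype.card A * ∑ e ∈ S, S.leftDegree e.1 := S.sq_card_le_card_mul_sum_leftDegree
    _ = Fintype.card A * ∑ i, ∑ e ∈ E i, S.leftDegree e.1 := by rw [sum_biUnion hE]
    _ ≤ Fintype.card A * ∑ _i : Fin n, Fintype.card B := by
      gcongr with i
      exact S.sum_leftDegree_fst_le_card _ (hsepS i)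
    _ = n * (Fintype.card A * Fintype.card B) := by
      rw [sum_const, card_univ, Fintype.card_fin, smul_eq_mul, mul_left_comm]
    _ ≤ n * (n * n) := Nat.mul_le_mul_left n <| by
      nlinarith [four_mul_le_sq_add (Fintype.card A) (Fintype.card B)]
    _ = n ^ 3 := by ring
  rw [← card_biUnion hE]
  exact Real.le_rpow_three_div_two_of_sq_le_pow_three (Nat.cast_nonneg _) (Nat.cast_nonneg _)
    (by exact_mod_cast hm)

/-- A bipartite graph on `2n` vertices whose edge set is a disjoint union of `n`
matchings which are 2-separated (no two distinct edges of the same matching are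
joined by a walk of length at most 2) has at most `n^(3/2)` edges. -/
theorem two_separated_bound {A B : Type*} [Fintype A] [Fintype B]
    [DecidableEq A] [DecidableEq B] (n : ℕ)
    (hcard : Fintype.card A + Fintype.card B = 2 * n)
    (E : Fin n → Finset (A × B))
    (hdisj : ∀ i j, i ≠ j → Disjoint (E i) (E j))
    (hmatch : ∀ i, ∀ e ∈ E i, ∀ e' ∈ E i, (e.1 = e'.1 ∨ e.2 = e'.2) → e = e')
    (hsep : ¬ ∃ t : ℕ, t ≤ 2 ∧ ∃ (a : ℕ → A ⊕ B) (i : Fin n) (e e' : A × B),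
      e ∈ E i ∧ e' ∈ E i ∧ e ≠ e' ∧
      (a 0 = Sum.inl e.1 ∨ a 0 = Sum.inr e.2) ∧
      (a t = Sum.inl e'.1 ∨ a t = Sum.inr e'.2) ∧
      (∀ s < t, ∃ (j : Fin n) (f : A × B), f ∈ E j ∧
        ((a s = Sum.inl f.1 ∧ a (s + 1) = Sum.inr f.2) ∨
         (a s = Sum.inr f.2 ∧ a (s + 1) = Sum.inl f.1)))) :
    ((∑ i, (E i).card : ℕ) : ℝ) ≤ (n : ℝ) ^ (3 / 2 : ℝ) :=
  two_separated_bound_general n hcard E hdisj hsep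
end

section
/- For every perfect square n, there exists a bipartite graph on 2n vertices with exactly n^{3/2} edges whose edge set is a disjoint union of n matchings such that any two distinct edges belonging to the same matching lie in different connected components of the graph (hence the matchings are l-separated for every l). -/
/-- The bipartite graph on `Fin n ⊕ Fin n` determined by a family of edge sets
`E i ⊆ Fin n × Fin n`. -/
def bipGraph {n : ℕ} (E : Fin n → Finset (Fin n × Fin n)) :
    SimpleGraph (Fin n ⊕ Fin n) where
  Adj u v :=
    match u, v with
    | Sum.inl x, Sum.inr y => ∃ i, (x, y) ∈ E i
    | Sum.inr y, Sum.inl x => ∃ i, (x, y) ∈ E i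
    | _, _ => False
  symm := ⟨by rintro (x | x) (y | y) h <;> simp_all⟩
  loopless := ⟨by rintro (x | x) h <;> simp_all⟩

/-!
Write each side's vertex set `Fin (m²)` as pairs (block, position) in `Fin m × Fin m`. The matching
indexed by `(p, q)` joins `(b, p)` to `(b, q)` in every block `b`, so each block carries a copy of
`K_{m,m}` and each matching has one edge per block. Adjacency preserves the block, hence so does
reachability, and two distinct edges of one matching lie in distinct blocks.
-/

open Finset

theorem SimpleGraph.Reachable.apply_eq_of_forall_adj {V β : Type*} {G : SimpleGraph V} {f : V → β}
    (hf : ∀ u v, G.Adj u v → f u = f v) {u v : V} (h : G.Reachable u v) : f u = f v := by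
  obtain ⟨w⟩ := h
  induction w with
  | nil => rfl
  | cons hadj _ ih => exact (hf _ _ hadj).trans ih

theorem bipGraph_reachable_inl_apply_eq {n : ℕ} {β : Type*} {E : Fin n → Finset (Fin n × Fin n)}
    {f : Fin n → β} (hf : ∀ i, ∀ e ∈ E i, f e.1 = f e.2) {x y : Fin n}
    (h : (bipGraph E).Reachable (Sum.inl x) (Sum.inl y)) : f x = f y := by
  refine h.apply_eq_of_forall_adj (f := Sum.elim f f) ?_
  rintro (x | x) (y | y) ⟨i, hi⟩
  · exact hf i _ hi
  · exact (hf i _ hi).symm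

section BlockMatching

variable {α β : Type*} [DecidableEq α] [Fintype β] (d : α ≃ β × β)

def blockMatching (i : α) : Finset (α × α) :=
  univ.image fun b => (d.symm (b, (d i).1), d.symm (b, (d i).2))

variable {d}

theorem mem_blockMatching {i : α} {e : α × α} :
    e ∈ blockMatching d i ↔
      (d e.1).1 = (d e.2).1 ∧ (d e.1).2 = (d i).1 ∧ (d e.2).2 = (d i).2 := by
  simp only [blockMatching, mem_image, mem_univ, true_and]
  constructor
  · rintro ⟨b, rfl⟩
    simp
  · rintro ⟨hb, hp, hq⟩
    refine ⟨(d e.1).1, Prod.ext ?_ ?_⟩ <;> rw [Equiv.symm_apply_eq]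
    · exact Prod.ext rfl hp.symm
    · exact Prod.ext hb hq.symm

theorem card_blockMatching (i : α) : #(blockMatching d i) = Fintype.card β :=
  card_image_of_injective _ fun b c h => by simpa using congrArg (fun e => (d e.1).1) h

theorem disjoint_blockMatching {i j : α} (hij : i ≠ j) :
    Disjoint (blockMatching d i) (blockMatching d j) := by
  refine disjoint_left.2 fun e hi hj => hij (d.injective ?_)
  rw [mem_blockMatching] at hi hj
  exact Prod.ext (hi.2.1.symm.trans hj.2.1) (hi.2.2.symm.trans hj.2.2)

theorem eq_of_mem_blockMatching_of_block_eq {i : α} {e e' : α × α}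
    (he : e ∈ blockMatching d i) (he' : e' ∈ blockMatching d i)
    (h : (d e.1).1 = (d e'.1).1) : e = e' := by
  rw [mem_blockMatching] at he he'
  refine Prod.ext (d.injective (Prod.ext h ?_)) (d.injective (Prod.ext ?_ ?_))
  · rw [he.2.1, he'.2.1]
  · rw [← he.1, ← he'.1, h]
  · rw [he.2.2, he'.2.2]

theorem eq_of_mem_blockMatching_of_fst_eq_or_snd_eq {i : α} {e e' : α × α}
    (he : e ∈ blockMatching d i) (he' : e' ∈ blockMatching d i)
    (h : e.1 = e'.1 ∨ e.2 = e'.2) : e = e' := by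
  refine eq_of_mem_blockMatching_of_block_eq he he' ?_
  rcases h with h | h
  · rw [h]
  · rw [(mem_blockMatching.1 he).1, (mem_blockMatching.1 he').1, h]

end BlockMatching

theorem perfect_square_construction_general (n m : ℕ) (hm : n = m ^ 2) :
    ∃ E : Fin n → Finset (Fin n × Fin n),
      (∀ i j, i ≠ j → Disjoint (E i) (E j)) ∧
      (∀ i, ∀ e ∈ E i, ∀ e' ∈ E i, (e.1 = e'.1 ∨ e.2 = e'.2) → e = e') ∧
      (∑ i, (E i).card = m ^ 3) ∧
      (∀ i, ∀ e ∈ E i, ∀ e' ∈ E i, e ≠ e' →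
        ¬ (bipGraph E).Reachable (Sum.inl e.1) (Sum.inl e'.1)) := by
  let d : Fin n ≃ Fin m × Fin m := (finCongr (hm.trans (sq m))).trans finProdFinEquiv.symm
  refine ⟨blockMatching d, fun i j => disjoint_blockMatching,
    fun i e he e' he' => eq_of_mem_blockMatching_of_fst_eq_or_snd_eq he he', ?_, ?_⟩
  · simp [card_blockMatching, hm, pow_succ]
  · intro i e he e' he' hne hreach
    refine hne (eq_of_mem_blockMatching_of_block_eq he he' ?_)
    exact bipGraph_reachable_inl_apply_eq (f := fun x => (d x).1)
      (fun _ _ he => (mem_blockMatching.1 he).1) hreach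

/-- For every perfect square `n = m²`, there is a bipartite graph on `2n`
vertices with exactly `n^(3/2) = m³` edges whose edge set is a disjoint union of
`n` matchings such that any two distinct edges of the same matching lie in
different connected components (hence the matchings are `l`-separated for all `l`). -/
theorem perfect_square_construction (n m : ℕ) (hn : 0 < n) (hm : n = m ^ 2) :
    ∃ E : Fin n → Finset (Fin n × Fin n),
      (∀ i j, i ≠ j → Disjoint (E i) (E j)) ∧
      (∀ i, ∀ e ∈ E i, ∀ e' ∈ E i, (e.1 = e'.1 ∨ e.2 = e'.2) → e = e') ∧
      (∑ i, (E i).card = m ^ 3) ∧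
      (∀ i, ∀ e ∈ E i, ∀ e' ∈ E i, e ≠ e' →
        ¬ (bipGraph E).Reachable (Sum.inl e.1) (Sum.inl e'.1)) :=
  perfect_square_construction_general n m hm
end

section
/- Let f(N) denote the maximum m such that every 3-coloring of the transitive tournament on N vertices contains a 1-color-avoiding directed path with at least m vertices, and let F(n) denote the maximum length N of a sequence L₁,...,L_N of triples from {1,...,n}³ such that for every i < j, L_i is strictly less than L_j in at least two coordinates. Then: if f(N) ≤ n, then F(n) ≥ N. -/
/-- Every 3-coloring of the transitive tournament on `N` vertices contains a
directed path with at least `m` vertices avoiding at least one color. -/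
def AvoidPathBound (N m : ℕ) : Prop :=
  ∀ col : Fin N → Fin N → Fin 3, ∃ k : ℕ, m ≤ k ∧
    ∃ s : Fin k → Fin N, StrictMono s ∧
      ∃ c : Fin 3, ∀ (i : ℕ) (h : i + 1 < k),
        col (s ⟨i, by omega⟩) (s ⟨i + 1, h⟩) ≠ c

/-- `fRamsey N` is the largest `m` such that every 3-coloring of the transitive
tournament on `N` vertices contains a 1-color-avoiding path with at least `m`
vertices. -/
noncomputable def fRamsey (N : ℕ) : ℕ := sSup {m | AvoidPathBound N m}

/-- `L` is a valid sequence of `N` triples from `{1,…,n}³`: every later triple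
strictly exceeds every earlier one in at least two coordinates. -/
def ValidSeq (n N : ℕ) (L : Fin N → Fin 3 → ℕ) : Prop :=
  (∀ k c, 1 ≤ L k c ∧ L k c ≤ n) ∧
  ∀ i j : Fin N, i < j → ∃ c₁ c₂ : Fin 3, c₁ ≠ c₂ ∧
    L i c₁ < L j c₁ ∧ L i c₂ < L j c₂

/-- `Fseq n` is the maximum length of a valid sequence of triples from `{1,…,n}³`. -/
noncomputable def Fseq (n : ℕ) : ℕ := sSup {N | ∃ L : Fin N → Fin 3 → ℕ, ValidSeq n N L}

/-- `PathEnd col v c k`: there is a strictly increasing path with `k` vertices,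
avoiding color `c`, ending at `v`. -/
def PathEnd {N : ℕ} (col : Fin N → Fin N → Fin 3) (v : Fin N) (c : Fin 3)
    (k : ℕ) : Prop :=
  ∃ s : Fin k → Fin N, StrictMono s ∧
    (∀ (i : ℕ) (hi : i + 1 < k), col (s ⟨i, by omega⟩) (s ⟨i + 1, hi⟩) ≠ c) ∧
    ∀ hk : 0 < k, s ⟨k - 1, by omega⟩ = v

lemma pathEnd_one {N : ℕ} (col : Fin N → Fin N → Fin 3) (v : Fin N) (c : Fin 3) :
    PathEnd col v c 1 := by
  refine ⟨fun _ => v, ?_, ?_, ?_⟩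
  · exact Subsingleton.strictMono _
  · intro i hi; omega
  · intro _; rfl

lemma pathEnd_extend {N : ℕ} (col : Fin N → Fin N → Fin 3) {v w : Fin N} {c : Fin 3}
    {k : ℕ} (hk : 0 < k) (hvw : v < w) (hc : col v w ≠ c) (hp : PathEnd col v c k) :
    PathEnd col w c (k + 1) := by
  obtain ⟨s, hs, hav, hend⟩ := hp
  have hlast : s ⟨k - 1, by omega⟩ = v := hend hk
  refine ⟨fun t => if ht : t.val < k then s ⟨t.val, ht⟩ else w, ?_, ?_, ?_⟩
  · intro a b hab
    by_cases hb : b.val < k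
    · have ha : a.val < k := by
        have : a.val < b.val := hab
        omega
      simp only [dif_pos ha, dif_pos hb]
      exact hs hab
    · have hbv : ¬ b.val < k := hb
      by_cases ha : a.val < k
      · simp only [dif_pos ha, dif_neg hbv]
        have h1 : s ⟨a.val, ha⟩ ≤ s ⟨k - 1, by omega⟩ := by
          apply hs.monotone
          show a.val ≤ k - 1
          omega
        calc s ⟨a.val, ha⟩ ≤ v := hlast ▸ h1
          _ < w := hvw
      · exfalso
        have h1 : a.val < b.val := hab
        have h2 : b.val < k + 1 := b.isLt
        omega
  · intro i hi
    by_cases h1 : i + 1 < k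
    · have h0 : i < k := by omega
      simp only [dif_pos h0, dif_pos h1]
      exact hav i h1
    · have hik : i + 1 = k := by omega
      have h0 : i < k := by omega
      have hnk : ¬ (i + 1 < k) := by omega
      simp only [dif_pos h0, dif_neg hnk]
      have : s ⟨i, h0⟩ = v := by
        have : (⟨i, h0⟩ : Fin k) = ⟨k - 1, by omega⟩ := by
          apply Fin.ext; simp; omega
        rw [this, hlast]
      rw [this]
      exact hc
  · intro _
    have : ¬ (k + 1 - 1 < k) := by omega
    simp only [dif_neg this]

/-- If `f(N) ≤ n` then `F(n) ≥ N`. -/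
theorem fRamsey_le_imp_Fseq_ge (n N : ℕ) (hn : 0 < n) (hN : 0 < N)
    (h : fRamsey N ≤ n) : N ≤ Fseq n := by
  classical
  -- Step 1: the set defining fRamsey is bounded above by N
  have hbddS : ∀ m ∈ {m | AvoidPathBound N m}, m ≤ N := by
    intro m hm
    obtain ⟨k, hk, s, hs, _⟩ := hm (fun _ _ => 0)
    have hkN : k ≤ N := by
      have := Fintype.card_le_of_injective s hs.injective
      simpa using this
    omega
  -- Step 2: obtain a coloring without long avoiding paths
  have hnot : ¬ AvoidPathBound N (n + 1) := by
    intro hA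
    have : n + 1 ≤ fRamsey N := le_csSup ⟨N, fun m hm => hbddS m hm⟩ hA
    omega
  rw [AvoidPathBound] at hnot
  push_neg at hnot
  obtain ⟨col, hcol⟩ := hnot
  have key : ∀ (k : ℕ) (s : Fin k → Fin N), StrictMono s →
      ∀ c : Fin 3, (∀ (i : ℕ) (hi : i + 1 < k),
        col (s ⟨i, by omega⟩) (s ⟨i + 1, hi⟩) ≠ c) → k ≤ n := by
    intro k s hs c hav
    by_contra hk
    obtain ⟨i, hi, heq⟩ := hcol k (by omega) s hs c
    exact hav i hi heq
  -- Step 3: define x v c = longest avoiding path ending at v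
  set x : Fin N → Fin 3 → ℕ := fun v c => sSup {k | PathEnd col v c k} with hx
  have hmemle : ∀ (v : Fin N) (c : Fin 3) (k : ℕ), PathEnd col v c k → k ≤ n := by
    intro v c k hp
    obtain ⟨s, hs, hav, _⟩ := hp
    exact key k s hs c hav
  have hbdd : ∀ (v : Fin N) (c : Fin 3), BddAbove {k | PathEnd col v c k} :=
    fun v c => ⟨n, fun k hk => hmemle v c k hk⟩
  have hxmem : ∀ (v : Fin N) (c : Fin 3), PathEnd col v c (x v c) := by
    intro v c
    exact Nat.sSup_mem ⟨1, by exact pathEnd_one col v c⟩ (hbdd v c)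
  have hx1 : ∀ (v : Fin N) (c : Fin 3), 1 ≤ x v c := by
    intro v c
    exact le_csSup (hbdd v c) (by exact pathEnd_one col v c)
  have hxn : ∀ (v : Fin N) (c : Fin 3), x v c ≤ n := by
    intro v c
    exact hmemle v c (x v c) (hxmem v c)
  have hmono : ∀ (i j : Fin N), i < j → ∀ c : Fin 3, col i j ≠ c → x i c < x j c := by
    intro i j hij c hc
    have hext : PathEnd col j c (x i c + 1) :=
      pathEnd_extend col (hx1 i c) hij hc (hxmem i c)
    have : x i c + 1 ≤ x j c := le_csSup (hbdd j c) (by exact hext)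
    omega
  -- Step 4: x is a valid sequence
  have hvalid : ValidSeq n N x := by
    refine ⟨fun k c => ⟨hx1 k c, hxn k c⟩, ?_⟩
    intro i j hij
    refine ⟨col i j + 1, col i j + 2, ?_, ?_, ?_⟩
    · revert hij; generalize col i j = c0; intro _; revert c0; decide
    · exact hmono i j hij _ (by generalize col i j = c0; revert c0; decide)
    · exact hmono i j hij _ (by generalize col i j = c0; revert c0; decide)
  -- Step 5: conclude via Fseq
  have hbddF : ∀ M ∈ {M | ∃ L : Fin M → Fin 3 → ℕ, ValidSeq n M L}, M ≤ n ^ 3 := by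
    intro M hM
    obtain ⟨L, hL1, hL2⟩ := hM
    have hg : Function.Injective (fun (k : Fin M) (c : Fin 3) =>
        (⟨L k c - 1, by have := hL1 k c; omega⟩ : Fin n)) := by
      intro a b hab
      by_contra hne
      rcases lt_or_gt_of_ne hne with hlt | hlt
      · obtain ⟨c₁, c₂, _, h1, _⟩ := hL2 a b hlt
        have := congrFun hab c₁
        have h1a := (hL1 a c₁).1
        have h1b := (hL1 b c₁).1
        simp only [Fin.mk.injEq] at this
        omega
      · obtain ⟨c₁, c₂, _, h1, _⟩ := hL2 b a hlt
        have := congrFun hab c₁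
        have h1a := (hL1 a c₁).1
        have h1b := (hL1 b c₁).1
        simp only [Fin.mk.injEq] at this
        omega
    have := Fintype.card_le_of_injective _ hg
    simpa using this
  exact le_csSup ⟨n ^ 3, fun M hM => hbddF M hM⟩ ⟨x, hvalid⟩
end

section
/- Let f and F be as in the triple-sequence reformulation: f(N) is the largest guaranteed 1-color-avoiding path length over 3-colorings of the transitive N-vertex tournament, and F(n) is the longest sequence of triples from {1,...,n}³ in which every later triple strictly exceeds every earlier triple in at least two coordinates. Then: if f(N) > n, then F(n) < N. -/
lemma third_coord (c₁ c₂ : Fin 3) (h : c₁ ≠ c₂) :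
    ∃ c₃ : Fin 3, ∀ c, c ≠ c₃ → c = c₁ ∨ c = c₂ := by
  revert c₁ c₂; decide

lemma key_lemma (n N : ℕ) (L : Fin N → Fin 3 → ℕ) (hL : ValidSeq n N L)
    (m : ℕ) (hm : n < m) (hA : AvoidPathBound N m) : False := by
  have exCol : ∀ i j : Fin N, i < j → ∃ c₃ : Fin 3, ∀ c, c ≠ c₃ → L i c < L j c := by
    intro i j hij
    obtain ⟨c₁, c₂, hne, h1, h2⟩ := hL.2 i j hij
    obtain ⟨c₃, hc₃⟩ := third_coord c₁ c₂ hne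
    exact ⟨c₃, fun c hc => by rcases hc₃ c hc with rfl | rfl <;> assumption⟩
  classical
  set col : Fin N → Fin N → Fin 3 :=
    fun i j => if h : i < j then (exCol i j h).choose else 0 with hcol
  obtain ⟨k, hk, s, hs, c, hc⟩ := hA col
  have main : ∀ (i : ℕ) (h : i < k), i + 1 ≤ L (s ⟨i, h⟩) c := by
    intro i
    induction i with
    | zero => intro h; exact (hL.1 _ _).1
    | succ i ih =>
      intro h
      have hi : i < k := by omega
      have hlt : s ⟨i, hi⟩ < s ⟨i + 1, h⟩ := hs (by simp [Fin.lt_def])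
      have hcolv : col (s ⟨i, hi⟩) (s ⟨i + 1, h⟩) = (exCol _ _ hlt).choose := by
        exact dif_pos hlt
      have hne : c ≠ (exCol _ _ hlt).choose := by
        intro heq
        exact hc i h (by rw [hcolv, ← heq])
      have := (exCol _ _ hlt).choose_spec c hne
      have := ih hi
      omega
  have hkpos : 0 < k := by omega
  have h1 := main (k - 1) (by omega)
  have h2 := (hL.1 (s ⟨k - 1, by omega⟩) c).2
  omega

/-- If `f(N) > n` then `F(n) < N`. -/
theorem fRamsey_gt_imp_Fseq_lt (n N : ℕ) (hn : 0 < n) (hN : 0 < N)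
    (h : n < fRamsey N) : Fseq n < N := by
  have hne : {m | AvoidPathBound N m}.Nonempty := by
    refine ⟨0, fun col => ⟨0, le_refl 0, Fin.elim0, ?_, 0, fun i hi => by omega⟩⟩
    intro a; exact a.elim0
  obtain ⟨m, hmA, hnm⟩ := exists_lt_of_lt_csSup hne h
  have hub : ∀ M ∈ {M | ∃ L : Fin M → Fin 3 → ℕ, ValidSeq n M L}, M ≤ N - 1 := by
    rintro M ⟨L, hL⟩
    by_contra hM
    have hNM : N ≤ M := by omega
    have hL' : ValidSeq n N (fun i => L (Fin.castLE hNM i)) := by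
      refine ⟨fun k c => hL.1 _ _, fun i j hij => hL.2 _ _ ?_⟩
      exact hij
    exact key_lemma n N _ hL' m hnm hmA
  have hne' : {M | ∃ L : Fin M → Fin 3 → ℕ, ValidSeq n M L}.Nonempty :=
    ⟨0, Fin.elim0, fun k => k.elim0, fun i => i.elim0⟩
  have := csSup_le hne' hub
  unfold Fseq
  omega
end

section
/- For every positive integer n, there exists a 3-coloring of the edges of the transitive tournament on {1,...,n³} such that every directed path that avoids at least one color has at most n² vertices; hence f(n³) ≤ n². -/
/-!
Order the vertices as the triples of `{1,…,n}³` lexicographically and color an edge by the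
first coordinate in which its ends differ. If a path avoids color `c`, then deleting coordinate
`c` from every triple keeps consecutive vertices strictly increasing in the lexicographic order
of pairs, so the path has at most `n²` vertices.
-/

open Fintype

section FirstDiff

variable {ι α : Type*} [LinearOrder ι] [WellFoundedLT ι] [Inhabited ι]

open Classical in
noncomputable def firstDiff (x y : ι → α) : ι :=
  if h : ∃ i, x i ≠ y i then wellFounded_lt.min {i | x i ≠ y i} h else default

theorem firstDiff_eq {x y : ι → α} {i : ι} (heq : ∀ j < i, x j = y j) (hne : x i ≠ y i) :
    firstDiff x y = i := by
  have hex : ∃ i, x i ≠ y i := ⟨i, hne⟩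
  rw [firstDiff, dif_pos hex]
  refine le_antisymm (wellFounded_lt.min_le hne) (not_lt.1 fun hlt => ?_)
  exact wellFounded_lt.min_mem {i | x i ≠ y i} hex (heq _ hlt)

def lexErase (c : ι) (x : Lex (ι → α)) : Lex ({j // j ≠ c} → α) :=
  toLex fun j => x j

theorem lexErase_lt_lexErase [PartialOrder α] {c : ι} {x y : Lex (ι → α)} (hxy : x < y)
    (hc : firstDiff x y ≠ c) : lexErase c x < lexErase c y := by
  obtain ⟨i, heq, hlt⟩ := hxy
  rw [firstDiff_eq heq hlt.ne] at hc
  exact ⟨⟨i, hc⟩, fun j hj => heq j hj, hlt⟩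

end FirstDiff

theorem card_le_of_chain {W : Type*} [Fintype W] [Preorder W] {k : ℕ} (t : Fin k → W)
    (ht : ∀ (i : ℕ) (h : i + 1 < k), t ⟨i, by omega⟩ < t ⟨i + 1, h⟩) : k ≤ card W := by
  cases k with
  | zero => exact Nat.zero_le _
  | succ k =>
    have hmono : StrictMono t := Fin.strictMono_iff_lt_succ.2 fun i => ht i (by omega)
    simpa using card_le_of_injective t hmono.injective

theorem lex_chain_length_le {ι α : Type*} [LinearOrder ι] [Fintype ι] [Inhabited ι]
    [LinearOrder α] [Fintype α] (c : ι) {k : ℕ} (s : Fin k → Lex (ι → α)) (hs : StrictMono s)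
    (hc : ∀ (i : ℕ) (h : i + 1 < k), firstDiff (s ⟨i, by omega⟩) (s ⟨i + 1, h⟩) ≠ c) :
    k ≤ card α ^ (card ι - 1) := by
  calc k ≤ card (Lex ({j // j ≠ c} → α)) :=
        card_le_of_chain (lexErase c ∘ s) fun i h =>
          lexErase_lt_lexErase (hs (Fin.mk_lt_mk.2 i.lt_succ_self)) (hc i h)
    _ = card α ^ (card ι - 1) := by simp

theorem fRamsey_le_of_coloring {N m : ℕ} (col : Fin N → Fin N → Fin 3)
    (hcol : ∀ (k : ℕ) (s : Fin k → Fin N), StrictMono s →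
      (∃ c : Fin 3, ∀ (i : ℕ) (h : i + 1 < k), col (s ⟨i, by omega⟩) (s ⟨i + 1, h⟩) ≠ c) →
        k ≤ m) :
    fRamsey N ≤ m :=
  csSup_le' fun _ hm =>
    let ⟨k, hmk, s, hs, c, hc⟩ := hm col
    hmk.trans (hcol k s hs ⟨c, hc⟩)

/-- There is a 3-coloring of the transitive tournament on `n³` vertices in which
every 1-color-avoiding directed path has at most `n²` vertices; hence
`f(n³) ≤ n²`. -/
theorem fRamsey_upper (n : ℕ) :
    (∃ col : Fin (n ^ 3) → Fin (n ^ 3) → Fin 3,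
      ∀ (k : ℕ) (s : Fin k → Fin (n ^ 3)), StrictMono s →
        (∃ c : Fin 3, ∀ (i : ℕ) (h : i + 1 < k),
          col (s ⟨i, by omega⟩) (s ⟨i + 1, h⟩) ≠ c) → k ≤ n ^ 2) ∧
    fRamsey (n ^ 3) ≤ n ^ 2 := by
  let e : Fin (n ^ 3) ≃o Lex (Fin 3 → Fin n) := orderIsoFinOfCardEq _ (by simp)
  let col : Fin (n ^ 3) → Fin (n ^ 3) → Fin 3 := fun u v => firstDiff (e u) (e v)
  have hcol : ∀ (k : ℕ) (s : Fin k → Fin (n ^ 3)), StrictMono s →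
      (∃ c : Fin 3, ∀ (i : ℕ) (h : i + 1 < k), col (s ⟨i, by omega⟩) (s ⟨i + 1, h⟩) ≠ c) →
        k ≤ n ^ 2 := fun k s hs ⟨c, hc⟩ => by
    simpa using lex_chain_length_le c (e ∘ s) (e.strictMono.comp hs) hc
  exact ⟨⟨col, hcol⟩, fRamsey_le_of_coloring col hcol⟩
end
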